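/- Let G' be a snark with a pentagon P' with vertices u_k and edges (u_k,u_{k+1}), k ∈ Z₅, let G₀' = G' − {u_k : k ∈ Z₅}, and for each k ∈ Z₅ let t_k be the vertex of G₀' such that (t_k,u_k) is an edge of G'. Let G* be a snark disjoint from G' with a pentagon P* with vertices v_k and edges (v_k,v_{k+1}), k ∈ Z₅, let G₀* = G* − {v_k : k ∈ Z₅}, and for each k ∈ Z₅ let w_k be the vertex of G₀* such that (v_k,w_k) is an edge of G*. Let G be the cubic graph consisting of G₀', G₀*, and the five new edges (t_k, w_{2k}), k ∈ Z₅ (indices mod 5). Then G admits no edge-3-coloring. -/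

import Mathlib

/-!
Suppose `γ` colours `G`. Restricting `γ` to `G₀'` and giving each edge `(t k, u k)` the colour
of the join edge `(t k, w (2 k))` colours `G'` with its pentagon edges deleted; on the other side
the edge `(w j, v j)` gets the colour of `(t (3 j), w j)`, since `3 = 2⁻¹` in `ZMod 5`. The three
colours at a vertex sum to zero in `Z₂ × Z₂`, so the colours `c k` of the five join edges sum to
zero. A finite check shows that then either the pentagon of `G'` can be coloured around the
boundary colours `c k`, or the pentagon of `G*` around `c (3 j)`; either way `G'` or `G*` would
be 3-edge-colourable.
-/

namespace SnarkPaper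

open SimpleGraph

/-- The color group `Z₂ × Z₂`. -/
abbrev Color : Type := ZMod 2 × ZMod 2

/-- The color `a = (0,1)`. -/
def colA : Color := (0, 1)
/-- The color `b = (1,0)`. -/
def colB : Color := (1, 0)
/-- The color `c = (1,1)`. -/
def colC : Color := (1, 1)

/-- The set of the three nonzero elements of `Z₂ × Z₂` used as colors. -/
def colorSet : Set Color := {colA, colB, colC}

variable {V V₁ V₂ : Type*}

/-- Two edges are adjacent if they are distinct and share an endpoint. -/
def EdgesAdj (e f : Sym2 V) : Prop := e ≠ f ∧ ∃ x, x ∈ e ∧ x ∈ f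

/-- The set of edge-3-colorings of `G`: functions assigning to each edge of `G` one of the
three nonzero elements of `Z₂ × Z₂` so that adjacent edges get distinct values (and pinned
to `0` off the edge set, so that counting colorings is faithful). -/
def EC (G : SimpleGraph V) : Set (Sym2 V → Color) :=
  {γ | (∀ e ∈ G.edgeSet, γ e ∈ colorSet) ∧ (∀ e ∉ G.edgeSet, γ e = 0) ∧
       ∀ e ∈ G.edgeSet, ∀ f ∈ G.edgeSet, EdgesAdj e f → γ e ≠ γ f}

/-- The set of 3-edge-decompositions of `G`: partitions of the edge set of `G` into three
classes such that no two adjacent edges lie in the same class. -/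
def ED (G : SimpleGraph V) : Set (Set (Set (Sym2 V))) :=
  {D | D.ncard = 3 ∧ (∀ s ∈ D, s ⊆ G.edgeSet) ∧
       (∀ e ∈ G.edgeSet, ∃! s, s ∈ D ∧ e ∈ s) ∧
       (∀ s ∈ D, ∀ e ∈ s, ∀ f ∈ s, ¬ EdgesAdj e f)}

/-- Two edges lie in the same class of the decomposition `D`. -/
def SameClass (D : Set (Set (Sym2 V))) (e f : Sym2 V) : Prop :=
  ∃ s ∈ D, e ∈ s ∧ f ∈ s

/-- A graph is cubic if every vertex has degree 3. -/
def IsCubic (G : SimpleGraph V) : Prop := ∀ v, (G.neighborSet v).ncard = 3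

/-- A graph is quasi-cubic if every vertex has degree 1 or 3. -/
def IsQuasiCubic (G : SimpleGraph V) : Prop :=
  ∀ v, (G.neighborSet v).ncard = 1 ∨ (G.neighborSet v).ncard = 3

/-- `G` is cyclically `n`-edge-connected: for any two vertex-disjoint cycles `C₁`, `C₂` and
any set `S` of at most `n-1` edges of `G` containing no edge of `C₁` or `C₂`, deleting `S`
leaves a path from a vertex of `C₁` to a vertex of `C₂`. -/
def CyclicallyEdgeConnected (G : SimpleGraph V) (n : ℕ) : Prop :=
  ∀ ⦃x y : V⦄ (C₁ : G.Walk x x) (C₂ : G.Walk y y), C₁.IsCycle → C₂.IsCycle →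
    (∀ w, w ∈ C₁.support → w ∉ C₂.support) →
    ∀ S : Set (Sym2 V), S ⊆ G.edgeSet → S.ncard ≤ n - 1 →
      (∀ e ∈ S, e ∉ C₁.edges ∧ e ∉ C₂.edges) →
      ∃ x' ∈ C₁.support, ∃ y' ∈ C₂.support, (G.deleteEdges S).Reachable x' y'

/-- A snark: a connected cubic graph with girth at least 5 which is cyclically
4-edge-connected and admits no edge-3-coloring. -/
def IsSnark (G : SimpleGraph V) : Prop :=
  G.Connected ∧ IsCubic G ∧ 5 ≤ G.girth ∧ CyclicallyEdgeConnected G 4 ∧ EC G = ∅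

/-- The edges `d₁` and `d₂` lie in a common (two-colored) Kempe cycle for the coloring `γ`. -/
def InCommonKempeCycle (G : SimpleGraph V) (γ : Sym2 V → Color) (d₁ d₂ : Sym2 V) : Prop :=
  ∃ x ∈ colorSet, ∃ y ∈ colorSet, x ≠ y ∧
    ∃ (a : V) (C : G.Walk a a), C.IsCycle ∧
      (∀ e ∈ C.edges, γ e = x ∨ γ e = y) ∧ d₁ ∈ C.edges ∧ d₂ ∈ C.edges

/-- Two edges of `G` are orthogonal if no edge-3-coloring of `G` puts them in a common
Kempe cycle. -/
def OrthogonalEdges (G : SimpleGraph V) (d₁ d₂ : Sym2 V) : Prop :=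
  d₁ ∈ G.edgeSet ∧ d₂ ∈ G.edgeSet ∧ ∀ γ ∈ EC G, ¬ InCommonKempeCycle G γ d₁ d₂

/-- The graph `G_e` for the edge `e = s(u,v)`: delete `u`, `v` and the five edges incident
to them (leaving `u` and `v` as isolated vertices), and add the new edge `d₁` joining the two
other neighbors of `u` and the new edge `d₂` joining the two other neighbors of `v`. -/
def edgeDeleted (G : SimpleGraph V) (u v : V) : SimpleGraph V :=
  SimpleGraph.fromEdgeSet
    ({e ∈ G.edgeSet | u ∉ e ∧ v ∉ e} ∪
     {e | ∃ x y, e = s(x, y) ∧ x ≠ y ∧ G.Adj u x ∧ G.Adj u y ∧ x ≠ v ∧ y ≠ v} ∪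
     {e | ∃ x y, e = s(x, y) ∧ x ≠ y ∧ G.Adj v x ∧ G.Adj v y ∧ x ≠ u ∧ y ≠ u})


/-- The graph `G` of Context 4.7: the union of `G0' = G' - {u_k}`, `G0* = G* - {v_k}`
(on the disjoint sum of the vertex types) together with the five connecting edges
`(t_k, w_{2k})`, `k in Z5`. -/
def pentagonJoin (G1 : SimpleGraph V₁) (G2 : SimpleGraph V₂)
    (u t : ZMod 5 → V₁) (v w : ZMod 5 → V₂) : SimpleGraph (V₁ ⊕ V₂) :=
  SimpleGraph.fromEdgeSet
    ((Sym2.map (Sum.inl : V₁ → V₁ ⊕ V₂)) '' {e ∈ G1.edgeSet | ∀ k : ZMod 5, u k ∉ e} ∪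
     (Sym2.map (Sum.inr : V₂ → V₁ ⊕ V₂)) '' {e ∈ G2.edgeSet | ∀ k : ZMod 5, v k ∉ e} ∪
     {e | ∃ k : ZMod 5, e = s(Sum.inl (t k), Sum.inr (w (2 * k)))})

theorem mem_colorSet_iff_ne_zero {x : Color} : x ∈ colorSet ↔ x ≠ 0 := by
  revert x
  simp only [colorSet, colA, colB, colC, Set.mem_insert_iff, Set.mem_singleton_iff]
  decide

theorem add_add_eq_zero_of_ne {x y z : Color} (hx : x ≠ 0) (hy : y ≠ 0) (hz : z ≠ 0)
    (hxy : x ≠ y) (hxz : x ≠ z) (hyz : y ≠ z) : x + y + z = 0 := by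
  revert x y z
  decide

theorem EdgesAdj.symm {e f : Sym2 V} (h : EdgesAdj e f) : EdgesAdj f e :=
  let ⟨hne, x, hxe, hxf⟩ := h
  ⟨hne.symm, x, hxf, hxe⟩

section EdgeColoring

variable {W : Type*} {G : SimpleGraph V} {γ : Sym2 V → Color}

theorem exists_mem_EC_comap {H : SimpleGraph W} (f : Copy H G) (hγ : γ ∈ EC G) :
    ∃ δ ∈ EC H, ∀ ⦃a b⦄, H.Adj a b → δ s(a, b) = γ s(f a, f b) := by
  classical
  obtain ⟨hγ_mem, -, hγ_adj⟩ := hγ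
  have hmap : ∀ e ∈ H.edgeSet, e.map f ∈ G.edgeSet := fun e he => f.toHom.map_mem_edgeSet he
  refine ⟨H.edgeSet.piecewise (fun e => γ (e.map f)) 0, ⟨fun e he => ?_, fun e he => ?_, ?_⟩,
    fun a b hab => Set.piecewise_eq_of_mem _ _ _ (H.mem_edgeSet.mpr hab)⟩
  · rw [Set.piecewise_eq_of_mem _ _ _ he]
    exact hγ_mem _ (hmap e he)
  · rw [Set.piecewise_eq_of_notMem _ _ _ he, Pi.zero_apply]
  · rintro e he e' he' ⟨hne, x, hx, hx'⟩
    rw [Set.piecewise_eq_of_mem _ _ _ he, Set.piecewise_eq_of_mem _ _ _ he']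
    exact hγ_adj _ (hmap e he) _ (hmap e' he')
      ⟨(Sym2.map.injective f.injective).ne hne, f x, Sym2.mem_map.mpr ⟨x, hx, rfl⟩,
        Sym2.mem_map.mpr ⟨x, hx', rfl⟩⟩

theorem piecewise_mem_EC_of_deleteEdges {S : Set (Sym2 V)} [DecidablePred (· ∈ S)]
    {δ : Sym2 V → Color} (hγ : γ ∈ EC (G.deleteEdges S)) (hS : S ⊆ G.edgeSet)
    (hδ : ∀ e ∈ S, δ e ∈ colorSet) (hδS : ∀ e ∈ S, ∀ f ∈ S, EdgesAdj e f → δ e ≠ δ f)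
    (hδγ : ∀ e ∈ S, ∀ f ∈ G.edgeSet \ S, EdgesAdj e f → δ e ≠ γ f) :
    S.piecewise δ γ ∈ EC G := by
  obtain ⟨hγ_mem, hγ_zero, hγ_adj⟩ := hγ
  rw [edgeSet_deleteEdges] at hγ_mem hγ_zero hγ_adj
  refine ⟨fun e he => ?_, fun e he => ?_, fun e he f hf hef => ?_⟩
  · by_cases heS : e ∈ S
    · simpa [heS] using hδ e heS
    · simpa [heS] using hγ_mem e ⟨he, heS⟩
  · rw [Set.piecewise_eq_of_notMem _ _ _ fun h => he (hS h)]
    exact hγ_zero e fun h => he h.1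
  · by_cases heS : e ∈ S <;> by_cases hfS : f ∈ S <;>
      simp only [Set.piecewise, heS, hfS, ite_true, ite_false]
    · exact hδS e heS f hfS hef
    · exact hδγ e heS f ⟨hf, hfS⟩ hef
    · exact (hδγ f hfS e ⟨he, heS⟩ hef.symm).symm
    · exact hγ_adj e ⟨he, heS⟩ f ⟨hf, hfS⟩ hef

theorem sum_neighborFinset_eq_zero [Fintype V] [DecidableRel G.Adj] (hγ : γ ∈ EC G) {x : V}
    (hx : (G.neighborSet x).ncard = 3) : ∑ y ∈ G.neighborFinset x, γ s(x, y) = 0 := by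
  classical
  have hcard : (G.neighborFinset x).card = 3 := by
    rwa [neighborFinset, ← Set.ncard_eq_toFinset_card']
  obtain ⟨a, b, c, hab, hac, hbc, habc⟩ := Finset.card_eq_three.mp hcard
  have hadj : ∀ {y}, y ∈ ({a, b, c} : Finset V) → G.Adj x y := fun hy =>
    (G.mem_neighborFinset x _).mp (habc ▸ hy)
  have hcol : ∀ {y}, G.Adj x y → γ s(x, y) ≠ 0 := fun hy =>
    mem_colorSet_iff_ne_zero.mp (hγ.1 _ hy)
  have hdist : ∀ {y z}, G.Adj x y → G.Adj x z → y ≠ z → γ s(x, y) ≠ γ s(x, z) :=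
    fun hy hz hyz => hγ.2.2 _ hy _ hz
      ⟨Sym2.congr_right.not.mpr hyz, x, Sym2.mem_mk_left x _, Sym2.mem_mk_left x _⟩
  have ha : G.Adj x a := hadj (by simp)
  have hb : G.Adj x b := hadj (by simp)
  have hc : G.Adj x c := hadj (by simp)
  rw [habc, Finset.sum_insert (by simp [hab, hac]), Finset.sum_pair hbc, ← add_assoc]
  exact add_add_eq_zero_of_ne (hcol ha) (hcol hb) (hcol hc) (hdist ha hb hab) (hdist ha hc hac)
    (hdist hb hc hbc)

-- Each vertex of `X` contributes `a + b + c = 0`, and each edge inside `X` is counted twice.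
theorem sum_cut_eq_zero [Fintype V] [DecidableEq V] [DecidableRel G.Adj] (hγ : γ ∈ EC G)
    (X : Finset V) (hX : ∀ x ∈ X, (G.neighborSet x).ncard = 3) :
    ∑ p ∈ (X ×ˢ Xᶜ).filter (fun p => G.Adj p.1 p.2), γ s(p.1, p.2) = 0 := by
  set f : V × V → Color := fun p => if G.Adj p.1 p.2 then γ s(p.1, p.2) else 0 with hf
  have hinside : ∑ p ∈ X ×ˢ X, f p = 0 := by
    refine Finset.sum_involution (fun p _ => p.swap) (fun p _ => ?_) (fun p _ hp => ?_)
      (fun p hp => Finset.mem_product.mpr (Finset.mem_product.mp hp).symm) (fun p _ => p.swap_swap)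
    · simp only [hf, Prod.fst_swap, Prod.snd_swap, G.adj_comm p.2, Sym2.eq_swap]
      exact CharTwo.add_self_eq_zero _
    · intro hswap
      have hdiag : p.1 = p.2 := congrArg Prod.snd hswap
      simp [hf, hdiag] at hp
  have htotal : ∑ x ∈ X, ∑ y, f (x, y) = 0 := Finset.sum_eq_zero fun x hx => by
    rw [← sum_neighborFinset_eq_zero hγ (hX x hx), neighborFinset_eq_filter, Finset.sum_filter]
  rw [Finset.sum_filter]
  simpa only [← Finset.sum_add_sum_compl X, Finset.sum_add_distrib, ← Finset.sum_product,
    hinside, zero_add] using htotal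

end EdgeColoring

theorem injective_extend {α β γ : Type*} {f : α → β} {g : α → γ} {e : β → γ}
    (hf : Function.Injective f) (hg : Function.Injective g) (he : Function.Injective e)
    (hge : ∀ a b, g a ≠ e b) : Function.Injective (Function.extend f g e) := by
  intro x y hxy
  by_cases hx : ∃ a, f a = x <;> by_cases hy : ∃ b, f b = y
  · obtain ⟨a, rfl⟩ := hx
    obtain ⟨b, rfl⟩ := hy
    rw [hf.extend_apply, hf.extend_apply] at hxy
    rw [hg hxy]
  · obtain ⟨a, rfl⟩ := hx
    rw [hf.extend_apply, Function.extend_apply' _ _ _ hy] at hxy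
    exact absurd hxy (hge a y)
  · obtain ⟨b, rfl⟩ := hy
    rw [hf.extend_apply, Function.extend_apply' _ _ _ hx] at hxy
    exact absurd hxy.symm (hge b x)
  · rw [Function.extend_apply' _ _ _ hx, Function.extend_apply' _ _ _ hy] at hxy
    exact he hxy

theorem girth_le_three {G : SimpleGraph V} {a b c : V} (hab : G.Adj a b) (hbc : G.Adj b c)
    (hca : G.Adj c a) : G.girth ≤ 3 :=
  girth_le_length (w := .cons hab (.cons hbc (.cons hca .nil))) <| by
    simp [Walk.isCycle_def, Walk.isTrail_def, hab.ne, hab.ne', hbc.ne, hca.ne, hca.ne',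
      Sym2.eq, Sym2.rel_iff']

theorem girth_le_four {G : SimpleGraph V} {a b c d : V} (hab : G.Adj a b) (hbc : G.Adj b c)
    (hcd : G.Adj c d) (hda : G.Adj d a) (hac : a ≠ c) (hbd : b ≠ d) : G.girth ≤ 4 :=
  girth_le_length (w := .cons hab (.cons hbc (.cons hcd (.cons hda .nil)))) <| by
    simp [Walk.isCycle_def, Walk.isTrail_def, hab.ne, hab.ne', hbc.ne, hcd.ne, hda.ne, Sym2.eq,
      Sym2.rel_iff', hac, hac.symm, hbd]

structure IsSpokedPentagon (G : SimpleGraph V) (u t : ZMod 5 → V) : Prop where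
  injective : Function.Injective u
  adj_succ : ∀ k, G.Adj (u k) (u (k + 1))
  adj_spoke : ∀ k, G.Adj (t k) (u k)
  spoke_ne : ∀ k l, t k ≠ u l

def pentagonEdges (u : ZMod 5 → V) : Set (Sym2 V) := Set.range fun k => s(u k, u (k + 1))

theorem mem_range_of_mem_pentagonEdges {u : ZMod 5 → V} {e : Sym2 V} (he : e ∈ pentagonEdges u)
    {x : V} (hx : x ∈ e) : x ∈ Set.range u := by
  obtain ⟨k, rfl⟩ := he
  rcases Sym2.mem_iff.mp hx with rfl | rfl
  exacts [⟨k, rfl⟩, ⟨k + 1, rfl⟩]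

theorem neighborSet_deleteEdges_pentagonEdges (G : SimpleGraph V) {u : ZMod 5 → V} {x : V}
    (hx : x ∉ Set.range u) :
    (G.deleteEdges (pentagonEdges u)).neighborSet x = G.neighborSet x := by
  ext y
  simp only [mem_neighborSet, deleteEdges_adj, and_iff_left_iff_imp]
  exact fun _ h => hx (mem_range_of_mem_pentagonEdges h (Sym2.mem_mk_left x y))

/-- `p k` colours the pentagon edge `(u k, u (k + 1))` and `c k` the spoke at `u k`. -/
def IsPentagonColoring (c p : ZMod 5 → Color) : Prop :=
  ∀ k, p k ≠ 0 ∧ p k ≠ p (k + 1) ∧ p k ≠ c k ∧ p k ≠ c (k + 1)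

namespace IsSpokedPentagon

variable {G : SimpleGraph V} {u t : ZMod 5 → V}

theorem spoke_injective (hP : IsSpokedPentagon G u t) (hg : 5 ≤ G.girth) :
    Function.Injective t := by
  have h₁ : ∀ k, t k ≠ t (k + 1) := fun k h =>
    absurd (girth_le_three (hP.adj_spoke k) (hP.adj_succ k) (h ▸ hP.adj_spoke (k + 1)).symm)
      (by omega)
  have hne_two : ∀ k : ZMod 5, k ≠ k + 2 := by decide
  have h₂ : ∀ k, t k ≠ t (k + 2) := fun k h => by
    have hsucc := hP.adj_succ (k + 1)
    rw [add_assoc, one_add_one_eq_two] at hsucc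
    exact absurd (girth_le_four (hP.adj_spoke k) (hP.adj_succ k) hsucc
      (h ▸ hP.adj_spoke (k + 2)).symm (hP.spoke_ne k (k + 1))
      (hP.injective.ne (hne_two k))) (by omega)
  have hcases : ∀ k l : ZMod 5, k ≠ l → l = k + 1 ∨ l = k + 2 ∨ k = l + 1 ∨ k = l + 2 := by
    decide
  intro k l hkl
  by_contra hne
  rcases hcases k l hne with rfl | rfl | rfl | rfl
  exacts [h₁ k hkl, h₂ k hkl, h₁ l hkl.symm, h₂ l hkl.symm]

theorem neighborSet_eq (hP : IsSpokedPentagon G u t) (hcub : IsCubic G) (m : ZMod 5) :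
    G.neighborSet (u m) = {u (m - 1), u (m + 1), t m} := by
  have hsub : ({u (m - 1), u (m + 1), t m} : Set V) ⊆ G.neighborSet (u m) := by
    have hpred := hP.adj_succ (m - 1)
    rw [sub_add_cancel] at hpred
    simp only [Set.insert_subset_iff, Set.singleton_subset_iff, mem_neighborSet]
    exact ⟨hpred.symm, hP.adj_succ m, (hP.adj_spoke m).symm⟩
  have hcard : ({u (m - 1), u (m + 1), t m} : Set V).ncard = 3 := by
    have hne : ∀ k : ZMod 5, k - 1 ≠ k + 1 := by decide
    exact Set.ncard_eq_three.mpr ⟨_, _, _, hP.injective.ne (hne m),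
      (hP.spoke_ne m _).symm, (hP.spoke_ne m _).symm, rfl⟩
  exact (Set.eq_of_subset_of_ncard_le hsub (by rw [hcub, hcard])
    (Set.finite_of_ncard_ne_zero (by rw [hcub]; decide))).symm

theorem eq_spoke_of_adj (hP : IsSpokedPentagon G u t) (hcub : IsCubic G) {m : ZMod 5} {y : V}
    (h : G.Adj (u m) y) (hy : s(u m, y) ∉ pentagonEdges u) : y = t m := by
  have hmem : y ∈ G.neighborSet (u m) := h
  rw [hP.neighborSet_eq hcub m] at hmem
  rcases hmem with rfl | rfl | rfl
  · exact absurd ⟨m - 1, by dsimp only; rw [sub_add_cancel, Sym2.eq_swap]⟩ hy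
  · exact absurd ⟨m, rfl⟩ hy
  · rfl

theorem spoke_notMem_pentagonEdges (hP : IsSpokedPentagon G u t) (k : ZMod 5) :
    s(t k, u k) ∉ pentagonEdges u := fun h =>
  let ⟨_, hl⟩ := mem_range_of_mem_pentagonEdges h (Sym2.mem_mk_left _ _)
  hP.spoke_ne k _ hl.symm

theorem adj_spoke_deleteEdges (hP : IsSpokedPentagon G u t) (k : ZMod 5) :
    (G.deleteEdges (pentagonEdges u)).Adj (t k) (u k) :=
  deleteEdges_adj.mpr ⟨hP.adj_spoke k, hP.spoke_notMem_pentagonEdges k⟩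

theorem adj_deleteEdges (hP : IsSpokedPentagon G u t) (hcub : IsCubic G) {a b : V}
    (h : (G.deleteEdges (pentagonEdges u)).Adj a b) :
    (G.Adj a b ∧ a ∉ Set.range u ∧ b ∉ Set.range u) ∨ ∃ k, s(a, b) = s(t k, u k) := by
  rw [deleteEdges_adj] at h
  obtain ⟨hab, hnot⟩ := h
  by_cases ha : a ∈ Set.range u
  · obtain ⟨k, rfl⟩ := ha
    exact .inr ⟨k, by rw [hP.eq_spoke_of_adj hcub hab hnot, Sym2.eq_swap]⟩
  by_cases hb : b ∈ Set.range u
  · obtain ⟨k, rfl⟩ := hb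
    exact .inr ⟨k, by rw [hP.eq_spoke_of_adj hcub hab.symm (Sym2.eq_swap ▸ hnot)]⟩
  exact .inl ⟨hab, ha, hb⟩

theorem sum_spokes_eq_zero [Fintype V] (hP : IsSpokedPentagon G u t) (hcub : IsCubic G)
    {γ : Sym2 V → Color} (hγ : γ ∈ EC (G.deleteEdges (pentagonEdges u))) :
    ∑ k, γ s(t k, u k) = 0 := by
  classical
  set H := G.deleteEdges (pentagonEdges u)
  set X := (Finset.univ.image u)ᶜ with hX_def
  have hX : ∀ x ∈ X, (H.neighborSet x).ncard = 3 := fun x hx => by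
    rw [neighborSet_deleteEdges_pentagonEdges G (by simpa [hX_def] using hx)]
    exact hcub x
  have hcut : (X ×ˢ Xᶜ).filter (fun p => H.Adj p.1 p.2) =
      Finset.univ.image fun k => (t k, u k) := by
    ext ⟨x, y⟩
    simp only [hX_def, compl_compl, Finset.mem_filter, Finset.mem_product, Finset.mem_compl,
      Finset.mem_image, Finset.mem_univ, true_and, Prod.mk.injEq]
    constructor
    · rintro ⟨⟨hx, k, rfl⟩, hadj⟩
      rcases hP.adj_deleteEdges hcub hadj with ⟨-, -, hy⟩ | ⟨l, hl⟩
      · exact absurd ⟨k, rfl⟩ hy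
      · rcases Sym2.eq_iff.mp hl with ⟨rfl, hkl⟩ | ⟨hxl, -⟩
        · exact ⟨l, rfl, hkl.symm⟩
        · exact absurd ⟨l, hxl.symm⟩ hx
    · rintro ⟨k, rfl, rfl⟩
      exact ⟨⟨fun ⟨l, hl⟩ => hP.spoke_ne k l hl.symm, k, rfl⟩, hP.adj_spoke_deleteEdges k⟩
  have hsum := sum_cut_eq_zero hγ _ hX
  rwa [hcut, Finset.sum_image fun k _ l _ h => hP.injective (Prod.ext_iff.mp h).2] at hsum

theorem pentagonEdge_injective (hP : IsSpokedPentagon G u t) :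
    Function.Injective fun k => s(u k, u (k + 1)) := fun k l h => by
  have hne : ∀ k l : ZMod 5, k = l + 1 → k + 1 ≠ l := by decide
  rcases Sym2.eq_iff.mp h with ⟨hkl, -⟩ | ⟨hkl, hlk⟩
  · exact hP.injective hkl
  · exact absurd (hP.injective hlk) (hne k l (hP.injective hkl))

theorem eq_succ_of_edgesAdj (hP : IsSpokedPentagon G u t) {k l : ZMod 5}
    (h : EdgesAdj s(u k, u (k + 1)) s(u l, u (l + 1))) : l = k + 1 ∨ k = l + 1 := by
  obtain ⟨hne, x, hxk, hxl⟩ := h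
  rcases Sym2.mem_iff.mp hxk with rfl | rfl <;> rcases Sym2.mem_iff.mp hxl with h | h
  · exact absurd (by rw [hP.injective h]) hne
  · exact .inr (hP.injective h)
  · exact .inl (hP.injective h).symm
  · exact absurd (by rw [add_right_cancel (hP.injective h)]) hne

theorem EC_nonempty_of_isPentagonColoring (hP : IsSpokedPentagon G u t) (hcub : IsCubic G)
    {γ : Sym2 V → Color} (hγ : γ ∈ EC (G.deleteEdges (pentagonEdges u))) {p : ZMod 5 → Color}
    (hp : IsPentagonColoring (fun k => γ s(t k, u k)) p) : (EC G).Nonempty := by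
  classical
  set δ := Function.extend (fun k => s(u k, u (k + 1))) p 0
  have hδ : ∀ k, δ s(u k, u (k + 1)) = p k := hP.pentagonEdge_injective.extend_apply p 0
  refine ⟨_, piecewise_mem_EC_of_deleteEdges (δ := δ) hγ ?_ ?_ ?_ ?_⟩
  · rintro _ ⟨k, rfl⟩
    exact hP.adj_succ k
  · rintro _ ⟨k, rfl⟩
    exact mem_colorSet_iff_ne_zero.mpr (hδ k ▸ (hp k).1)
  · rintro _ ⟨k, rfl⟩ _ ⟨l, rfl⟩ hkl
    simp only [hδ]
    rcases hP.eq_succ_of_edgesAdj hkl with rfl | rfl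
    exacts [(hp k).2.1, (hp l).2.1.symm]
  · rintro _ ⟨k, rfl⟩ f ⟨hf, hfP⟩ ⟨-, x, hxk, hxf⟩
    obtain ⟨y, rfl⟩ := Sym2.mem_iff_exists.mp hxf
    rw [hδ]
    rcases Sym2.mem_iff.mp hxk with rfl | rfl
    all_goals
      rw [hP.eq_spoke_of_adj hcub (G.mem_edgeSet.mp hf) hfP, Sym2.eq_swap]
    exacts [(hp k).2.2.1, (hp k).2.2.2]

theorem exists_copy_deleteEdges {W : Type*} (hP : IsSpokedPentagon G u t) (hcub : IsCubic G)
    {K : SimpleGraph W} {e : V → W} {g : ZMod 5 → W} (he : Function.Injective e)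
    (hg : Function.Injective g) (hge : ∀ k x, g k ≠ e x)
    (hadj : ∀ ⦃x y⦄, G.Adj x y → x ∉ Set.range u → y ∉ Set.range u → K.Adj (e x) (e y))
    (hspoke : ∀ k, K.Adj (e (t k)) (g k)) :
    ∃ φ : Copy (G.deleteEdges (pentagonEdges u)) K, ∀ k, φ (t k) = e (t k) ∧ φ (u k) = g k := by
  set φ := Function.extend u g e
  have hφ : ∀ x ∉ Set.range u, φ x = e x := fun x hx => Function.extend_apply' g e x hx
  have hφu : ∀ k, φ (u k) = g k := hP.injective.extend_apply g e
  have hφt : ∀ k, φ (t k) = e (t k) := fun k => hφ _ fun ⟨l, hl⟩ => hP.spoke_ne k l hl.symm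
  refine ⟨⟨⟨φ, fun {a b} hab => ?_⟩, injective_extend hP.injective hg he hge⟩,
    fun k => ⟨hφt k, hφu k⟩⟩
  rcases hP.adj_deleteEdges hcub hab with ⟨hab, ha, hb⟩ | ⟨k, hk⟩
  · rw [hφ a ha, hφ b hb]
    exact hadj hab ha hb
  · rcases Sym2.eq_iff.mp hk with ⟨rfl, rfl⟩ | ⟨rfl, rfl⟩
    · rw [hφt, hφu]
      exact hspoke k
    · rw [hφt, hφu]
      exact (hspoke k).symm

end IsSpokedPentagon

section Join

variable {G1 : SimpleGraph V₁} {G2 : SimpleGraph V₂} {u t : ZMod 5 → V₁} {v w : ZMod 5 → V₂}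

theorem pentagonJoin_adj_inl {x y : V₁} (h : G1.Adj x y) (hx : x ∉ Set.range u)
    (hy : y ∉ Set.range u) : (pentagonJoin G1 G2 u t v w).Adj (.inl x) (.inl y) := by
  refine (fromEdgeSet_adj _).mpr
    ⟨.inl (.inl ⟨s(x, y), ⟨h, fun k hk => ?_⟩, rfl⟩), by simpa using h.ne⟩
  rcases Sym2.mem_iff.mp hk with hk | hk
  exacts [hx ⟨k, hk⟩, hy ⟨k, hk⟩]

theorem pentagonJoin_adj_inr {x y : V₂} (h : G2.Adj x y) (hx : x ∉ Set.range v)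
    (hy : y ∉ Set.range v) : (pentagonJoin G1 G2 u t v w).Adj (.inr x) (.inr y) := by
  refine (fromEdgeSet_adj _).mpr
    ⟨.inl (.inr ⟨s(x, y), ⟨h, fun k hk => ?_⟩, rfl⟩), by simpa using h.ne⟩
  rcases Sym2.mem_iff.mp hk with hk | hk
  exacts [hx ⟨k, hk⟩, hy ⟨k, hk⟩]

theorem pentagonJoin_adj_spoke (k : ZMod 5) :
    (pentagonJoin G1 G2 u t v w).Adj (.inl (t k)) (.inr (w (2 * k))) :=
  (fromEdgeSet_adj _).mpr ⟨.inr ⟨k, rfl⟩, Sum.inl_ne_inr⟩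

theorem exists_mem_EC_deleteEdges_left (hP : IsSpokedPentagon G1 u t) (hcub : IsCubic G1)
    (hw : Function.Injective w) {γ : Sym2 (V₁ ⊕ V₂) → Color}
    (hγ : γ ∈ EC (pentagonJoin G1 G2 u t v w)) :
    ∃ γ₁ ∈ EC (G1.deleteEdges (pentagonEdges u)),
      ∀ k, γ₁ s(t k, u k) = γ s(.inl (t k), .inr (w (2 * k))) := by
  have h2 : Function.Injective fun k : ZMod 5 => 2 * k := by decide
  obtain ⟨φ, hφ⟩ := hP.exists_copy_deleteEdges hcub (g := fun k => .inr (w (2 * k)))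
    Sum.inl_injective (fun _ _ h => h2 (hw (Sum.inr_injective h))) (fun _ _ => Sum.inr_ne_inl)
    (fun _ _ => pentagonJoin_adj_inl) pentagonJoin_adj_spoke
  obtain ⟨γ₁, hγ₁, hφγ⟩ := exists_mem_EC_comap φ hγ
  refine ⟨γ₁, hγ₁, fun k => ?_⟩
  rw [hφγ (hP.adj_spoke_deleteEdges k), (hφ k).1, (hφ k).2]

theorem exists_mem_EC_deleteEdges_right (hQ : IsSpokedPentagon G2 v w) (hcub : IsCubic G2)
    (ht : Function.Injective t) {γ : Sym2 (V₁ ⊕ V₂) → Color}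
    (hγ : γ ∈ EC (pentagonJoin G1 G2 u t v w)) :
    ∃ γ₂ ∈ EC (G2.deleteEdges (pentagonEdges v)),
      ∀ j, γ₂ s(w j, v j) = γ s(.inl (t (3 * j)), .inr (w j)) := by
  have h3 : Function.Injective fun j : ZMod 5 => 3 * j := by decide
  have hinv : ∀ j : ZMod 5, 2 * (3 * j) = j := by decide
  obtain ⟨φ, hφ⟩ := hQ.exists_copy_deleteEdges hcub (K := pentagonJoin G1 G2 u t v w)
    (g := fun j => .inl (t (3 * j)))
    Sum.inr_injective (fun _ _ h => h3 (ht (Sum.inl_injective h))) (fun _ _ => Sum.inl_ne_inr)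
    (fun _ _ => pentagonJoin_adj_inr)
    (fun j => by simpa only [hinv] using (pentagonJoin_adj_spoke (3 * j)).symm)
  obtain ⟨γ₂, hγ₂, hφγ⟩ := exists_mem_EC_comap φ hγ
  refine ⟨γ₂, hγ₂, fun j => ?_⟩
  rw [hφγ (hQ.adj_spoke_deleteEdges j), (hφ j).1, (hφ j).2, Sym2.eq_swap]

end Join

/-- Kirchhoff's rule at `u (k + 1)` forces `p (k + 1) = p k + c (k + 1)`; `x` is the colour
`p 0`. -/
def kirchhoffColoring (c : ZMod 5 → Color) (x : Color) (k : ZMod 5) : Color :=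
  x + ∑ i : Fin k.val, c (i.val + 1)

instance (c p : ZMod 5 → Color) : Decidable (IsPentagonColoring c p) :=
  inferInstanceAs (Decidable (∀ _, _))

theorem exists_isPentagonColoring {c : ZMod 5 → Color} (hc : ∀ k, c k ≠ 0)
    (hsum : ∑ k, c k = 0) :
    (∃ p, IsPentagonColoring c p) ∨ ∃ p, IsPentagonColoring (fun j => c (3 * j)) p := by
  -- One colour sits on three spokes and the other two on one spoke each; the pentagon can be
  -- coloured exactly when these two spokes are adjacent, and `j ↦ 3 * j` exchanges adjacent and
  -- non-adjacent pairs of positions.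
  have key : ∀ c : ZMod 5 → Color, (∀ k, c k ≠ 0) → ∑ k, c k = 0 → ∃ x,
      IsPentagonColoring c (kirchhoffColoring c x) ∨
        IsPentagonColoring (fun j => c (3 * j)) (kirchhoffColoring (fun j => c (3 * j)) x) := by
    decide +kernel
  obtain ⟨x, h | h⟩ := key c hc hsum
  exacts [.inl ⟨_, h⟩, .inr ⟨_, h⟩]

theorem statement_12_general {V₁ V₂ : Type*} [Fintype V₁]
    (G1 : SimpleGraph V₁) (G2 : SimpleGraph V₂) (hG1 : IsSnark G1) (hG2 : IsSnark G2)
    (u t : ZMod 5 → V₁) (v w : ZMod 5 → V₂)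
    (huinj : Function.Injective u) (hP1 : ∀ k, G1.Adj (u k) (u (k + 1)))
    (ht : ∀ k, G1.Adj (t k) (u k)) (htu : ∀ k l, t k ≠ u l)
    (hvinj : Function.Injective v) (hP2 : ∀ k, G2.Adj (v k) (v (k + 1)))
    (hw : ∀ k, G2.Adj (v k) (w k)) (hwv : ∀ k l, w k ≠ v l) :
    EC (pentagonJoin G1 G2 u t v w) = ∅ := by
  obtain ⟨-, hcub1, hgirth1, -, hEC1⟩ := hG1
  obtain ⟨-, hcub2, hgirth2, -, hEC2⟩ := hG2
  have hP : IsSpokedPentagon G1 u t := ⟨huinj, hP1, ht, htu⟩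
  have hQ : IsSpokedPentagon G2 v w := ⟨hvinj, hP2, fun k => (hw k).symm, hwv⟩
  refine Set.eq_empty_of_forall_notMem fun γ hγ => ?_
  obtain ⟨γ₁, hγ₁, hspoke₁⟩ :=
    exists_mem_EC_deleteEdges_left hP hcub1 (hQ.spoke_injective hgirth2) hγ
  obtain ⟨γ₂, hγ₂, hspoke₂⟩ :=
    exists_mem_EC_deleteEdges_right hQ hcub2 (hP.spoke_injective hgirth1) hγ
  set c : ZMod 5 → Color := fun k => γ s(.inl (t k), .inr (w (2 * k))) with hc_def
  have hc : ∀ k, c k ≠ 0 := fun k =>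
    mem_colorSet_iff_ne_zero.mp (hγ.1 _ (pentagonJoin_adj_spoke k))
  have hsum : ∑ k, c k = 0 := by simpa only [hspoke₁] using hP.sum_spokes_eq_zero hcub1 hγ₁
  have hinv : ∀ j : ZMod 5, 2 * (3 * j) = j := by decide
  rcases exists_isPentagonColoring hc hsum with ⟨p, hp⟩ | ⟨p, hp⟩
  · exact (hP.EC_nonempty_of_isPentagonColoring hcub1 hγ₁ (p := p)
      (by simpa only [hspoke₁] using hp)).ne_empty hEC1
  · exact (hQ.EC_nonempty_of_isPentagonColoring hcub2 hγ₂ (p := p)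
      (by simpa only [hspoke₂, hc_def, hinv] using hp)).ne_empty hEC2

/-- **Context 4.7 / Isaacs.** If `G'` and `G*` are snarks with pentagons `P' = (u k)` and
`P* = (v k)`, with third edges `(t k, u k)` and `(v k, w k)`, then the graph `G` formed from
`G0'`, `G0*` and the five edges `(t k, w (2k))` admits no edge-3-coloring. -/
theorem statement_12 {V₁ V₂ : Type*} [Fintype V₁] [Fintype V₂]
    (G1 : SimpleGraph V₁) (G2 : SimpleGraph V₂) (hG1 : IsSnark G1) (hG2 : IsSnark G2)
    (u t : ZMod 5 → V₁) (v w : ZMod 5 → V₂)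
    (huinj : Function.Injective u) (hP1 : ∀ k, G1.Adj (u k) (u (k + 1)))
    (ht : ∀ k, G1.Adj (t k) (u k)) (htu : ∀ k l, t k ≠ u l)
    (hvinj : Function.Injective v) (hP2 : ∀ k, G2.Adj (v k) (v (k + 1)))
    (hw : ∀ k, G2.Adj (v k) (w k)) (hwv : ∀ k l, w k ≠ v l) :
    EC (pentagonJoin G1 G2 u t v w) = ∅ :=
  statement_12_general G1 G2 hG1 hG2 u t v w huinj hP1 ht htu hvinj hP2 hw hwv

end SnarkPaper
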